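/- For every integer n ≥ 0, the number of elements of Q̄_4(0,n) equals the number of elements of P_7(0,n). -/

import Mathlib

noncomputable section

/-- The i-th largest part (1-indexed) of a partition, represented as a
multiset of parts; `0` if `i` exceeds the number of parts. -/
def partAt (mu : Multiset ℕ) (i : ℕ) : ℕ :=
  (mu.sort (· ≥ ·)).getD (i - 1) 0

/-- The smallest part of a partition, with the convention that the smallest
part of the empty partition is `+∞`. -/
def sMin (mu : Multiset ℕ) : ℕ∞ := (mu.map ((↑) : ℕ → ℕ∞)).inf

/-- Q̄₄(0,n): triples (j, α, β) with j ≥ 1, parts of α and β at most j,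
|α|+|β|+j² = n, β₁ = β₂ = j, ℓ(β) ≥ ℓ(α)+1, α₁ = α₂ = j, s(α) ≥ 2 and
s(β) = 2. -/
def Qbar4 (n : ℕ) : Set (ℕ × Multiset ℕ × Multiset ℕ) :=
  {x | 1 ≤ x.1 ∧ (∀ a ∈ x.2.1, 0 < a) ∧ (∀ a ∈ x.2.2, 0 < a) ∧
       (∀ a ∈ x.2.1, a ≤ x.1) ∧ (∀ a ∈ x.2.2, a ≤ x.1) ∧
       x.2.1.sum + x.2.2.sum + x.1 * x.1 = n ∧
       partAt x.2.2 1 = x.1 ∧ partAt x.2.2 2 = x.1 ∧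
       Multiset.card x.2.1 + 1 ≤ Multiset.card x.2.2 ∧
       partAt x.2.1 1 = x.1 ∧ partAt x.2.1 2 = x.1 ∧
       2 ≤ sMin x.2.1 ∧ sMin x.2.2 = 2}

/-- P₇(0,n): triples (j', γ, δ) with j' ≥ 1, parts of γ and δ at most j',
|γ|+|δ|+j'² = n, ℓ(γ) = ℓ(δ), γ₁ = j'-1 > γ₂, δ₁ = j' and δ has no part
equal to 2. -/
def P7 (n : ℕ) : Set (ℕ × Multiset ℕ × Multiset ℕ) :=
  {x | 1 ≤ x.1 ∧ (∀ a ∈ x.2.1, 0 < a) ∧ (∀ a ∈ x.2.2, 0 < a) ∧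
       (∀ a ∈ x.2.1, a ≤ x.1) ∧ (∀ a ∈ x.2.2, a ≤ x.1) ∧
       x.2.1.sum + x.2.2.sum + x.1 * x.1 = n ∧
       Multiset.card x.2.1 = Multiset.card x.2.2 ∧
       (partAt x.2.1 1 : ℤ) = (x.1 : ℤ) - 1 ∧
       (partAt x.2.1 2 : ℤ) < (x.1 : ℤ) - 1 ∧
       partAt x.2.2 1 = x.1 ∧ 2 ∉ x.2.2}

/-
Strip the forced parts. An element of Q̄₄(0,n) has the form (j, j j A, j j 2 (B+1)), where the
parts of A lie in [2, j], those of B in [1, j-1], ℓ(A) ≤ ℓ(B), and B+1 adds 1 to every part.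
The triple (j+1, j B, (j+1) (A+1) 1^(ℓ(B)-ℓ(A))) lies in P₇(0,n): j is the unique largest part
of γ = j B, δ has no part 2 because the parts of A+1 are at least 3, both have ℓ(B)+1 parts,
and the weight is preserved since (j+1)² = j² + 2j + 1. Conversely γ without its largest part
recovers B, and δ without its largest part splits into its ones and its parts ≥ 3, which recover
A. So both sets are injective images of the same set of triples (j, A, B).
-/

open Multiset

lemma List.le_getD_iff_lt_countP {l : List ℕ} (hl : l.Pairwise (· ≥ ·)) {j : ℕ} (hj : 0 < j)
    (i : ℕ) : j ≤ l.getD i 0 ↔ i < l.countP (j ≤ ·) := by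
  induction l generalizing i with
  | nil => simp; omega
  | cons a t ih =>
    obtain ⟨hat, ht⟩ := List.pairwise_cons.mp hl
    have ht0 : ¬ j ≤ a → t.countP (j ≤ ·) = 0 := fun hja =>
      List.countP_eq_zero.mpr fun x hx => by have := hat x hx; simp; omega
    cases i with
    | zero => rw [List.getD_cons_zero, List.countP_cons]; by_cases hja : j ≤ a <;> simp [hja, ht0]
    | succ i =>
      rw [List.getD_cons_succ, ih ht, List.countP_cons]
      by_cases hja : j ≤ a <;> simp [hja, ht0]

lemma le_partAt_succ_iff (μ : Multiset ℕ) {j : ℕ} (hj : 0 < j) (i : ℕ) :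
    j ≤ partAt μ (i + 1) ↔ i < μ.countP (j ≤ ·) := by
  rw [partAt, Nat.add_sub_cancel, List.le_getD_iff_lt_countP (μ.pairwise_sort _) hj,
    ← coe_countP, sort_eq]

lemma partAt_le {μ : Multiset ℕ} {j : ℕ} (h : ∀ a ∈ μ, a ≤ j) (i : ℕ) : partAt μ i ≤ j := by
  unfold partAt
  rcases lt_or_ge (i - 1) (μ.sort (· ≥ ·)).length with hi | hi
  · rw [List.getD_eq_getElem _ _ hi]
    exact h _ ((μ.mem_sort _).mp (List.getElem_mem hi))
  · rw [List.getD_eq_default _ _ hi]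
    exact Nat.zero_le j

lemma le_partAt_one {μ : Multiset ℕ} {a : ℕ} (ha : a ∈ μ) : a ≤ partAt μ 1 := by
  rcases Nat.eq_zero_or_pos a with rfl | hpos
  · exact Nat.zero_le _
  · exact (le_partAt_succ_iff μ hpos 0).mpr (countP_pos.mpr ⟨a, ha, le_rfl⟩)

lemma partAt_succ_eq_iff {μ : Multiset ℕ} {j : ℕ} (hj : 0 < j) (h : ∀ a ∈ μ, a ≤ j) (i : ℕ) :
    partAt μ (i + 1) = j ↔ i < μ.count j := by
  have hcount : μ.countP (j ≤ ·) = μ.count j :=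
    countP_congr rfl fun a ha => by have := h a ha; apply propext; omega
  rw [← hcount, ← le_partAt_succ_iff μ hj]
  have := partAt_le h (i + 1)
  omega

lemma partAt_one_eq_and_partAt_two_lt_iff {μ : Multiset ℕ} {j : ℕ} (hj : 0 < j)
    (h : ∀ a ∈ μ, a ≤ j) : partAt μ 1 = j ∧ partAt μ 2 < j ↔ μ.count j = 1 := by
  rw [partAt_succ_eq_iff hj h 0, (partAt_le h 2).lt_iff_ne, Ne, partAt_succ_eq_iff hj h 1]
  omega

lemma partAt_cons_cons_self {j : ℕ} (hj : 0 < j) {μ : Multiset ℕ} (h : ∀ a ∈ μ, a ≤ j) {i : ℕ}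
    (hi : i ≤ 1) : partAt (j ::ₘ j ::ₘ μ) (i + 1) = j := by
  refine (partAt_succ_eq_iff hj ?_ i).mpr ?_
  · exact forall_mem_cons.mpr ⟨le_rfl, forall_mem_cons.mpr ⟨le_rfl, h⟩⟩
  · rw [count_cons_self, count_cons_self]
    omega

lemma exists_eq_cons_cons_of_partAt_two_eq {μ : Multiset ℕ} {j : ℕ} (hj : 0 < j)
    (h : ∀ a ∈ μ, a ≤ j) (h2 : partAt μ 2 = j) : ∃ ν, μ = j ::ₘ j ::ₘ ν := by
  have hcount := (partAt_succ_eq_iff hj h 1).mp h2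
  obtain ⟨μ', rfl⟩ := exists_cons_of_mem (count_pos.mp (by omega : 0 < μ.count j))
  rw [count_cons_self] at hcount
  obtain ⟨ν, rfl⟩ := exists_cons_of_mem (count_pos.mp (by omega : 0 < μ'.count j))
  exact ⟨ν, rfl⟩

lemma le_sMin_iff {μ : Multiset ℕ} {k : ℕ} : (k : ℕ∞) ≤ sMin μ ↔ ∀ a ∈ μ, k ≤ a := by
  simp [sMin, Multiset.le_inf]

lemma sMin_eq_iff {μ : Multiset ℕ} {k : ℕ} : sMin μ = k ↔ k ∈ μ ∧ ∀ a ∈ μ, k ≤ a := by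
  refine ⟨fun h => ?_, fun ⟨hk, hle⟩ => le_antisymm (inf_le (mem_map_of_mem _ hk))
    (le_sMin_iff.mpr hle)⟩
  have hle := le_sMin_iff.mp h.ge
  refine ⟨by_contra fun hk => ?_, hle⟩
  have : ((k + 1 : ℕ) : ℕ∞) ≤ sMin μ :=
    le_sMin_iff.mpr fun a ha => lt_of_le_of_ne (hle a ha) fun e => hk (e ▸ ha)
  rw [h, Nat.cast_le] at this
  omega

lemma exists_map_add_one_eq {s : Multiset ℕ} (hs : ∀ a ∈ s, 0 < a) :
    ∃ t : Multiset ℕ, t.map (· + 1) = s :=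
  ⟨s.map (· - 1), by
    rw [map_map]
    exact (map_congr rfl fun a ha => Nat.sub_add_cancel (hs a ha)).trans (map_id s)⟩

lemma exists_eq_map_add_one_add_replicate_one {s : Multiset ℕ} (hs : ∀ a ∈ s, 0 < a) :
    ∃ (t : Multiset ℕ) (k : ℕ), s = t.map (· + 1) + replicate k 1 ∧ ∀ a ∈ t, 0 < a := by
  obtain ⟨t, ht⟩ := exists_map_add_one_eq (s := s.filter (2 ≤ ·)) fun a ha => by
    have := (mem_filter.mp ha).2; omega
  refine ⟨t, card (s.filter (¬ 2 ≤ ·)), ?_, fun a ha => ?_⟩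
  · rw [ht, ← eq_replicate_card.mpr, filter_add_not]
    intro a ha
    have := hs a (mem_filter.mp ha).1
    have := (mem_filter.mp ha).2
    omega
  · have := (mem_filter.mp (ht ▸ mem_map_of_mem (· + 1) ha)).2
    omega

lemma filter_map_add_one_add_replicate_one {t : Multiset ℕ} (ht : ∀ a ∈ t, 0 < a) (k : ℕ) :
    (t.map (· + 1) + replicate k 1).filter (2 ≤ ·) = t.map (· + 1) := by
  rw [filter_add, filter_eq_self.mpr, filter_eq_nil.mpr, add_zero]
  · intro b hb
    rw [eq_of_mem_replicate hb]
    decide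
  · simp only [forall_mem_map_iff]
    intro a ha
    have := ht a ha
    omega

lemma sum_map_add_one (s : Multiset ℕ) : (s.map (· + 1)).sum = s.sum + card s := by
  simp [sum_map_add]

def coreTriples (n : ℕ) : Set (ℕ × Multiset ℕ × Multiset ℕ) :=
  {x | 2 ≤ x.1 ∧ (∀ a ∈ x.2.1, 2 ≤ a ∧ a ≤ x.1) ∧ (∀ b ∈ x.2.2, 0 < b ∧ b < x.1) ∧
    card x.2.1 ≤ card x.2.2 ∧ x.2.1.sum + x.2.2.sum + card x.2.2 + x.1 * x.1 + 4 * x.1 + 2 = n}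

lemma mem_coreTriples {n j : ℕ} {A B : Multiset ℕ} :
    (j, A, B) ∈ coreTriples n ↔ 2 ≤ j ∧ (∀ a ∈ A, 2 ≤ a ∧ a ≤ j) ∧ (∀ b ∈ B, 0 < b ∧ b < j) ∧
      card A ≤ card B ∧ A.sum + B.sum + card B + j * j + 4 * j + 2 = n :=
  Iff.rfl

def toQbar4 : ℕ × Multiset ℕ × Multiset ℕ → ℕ × Multiset ℕ × Multiset ℕ
  | (j, A, B) => (j, j ::ₘ j ::ₘ A, j ::ₘ j ::ₘ 2 ::ₘ B.map (· + 1))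

def toP7 : ℕ × Multiset ℕ × Multiset ℕ → ℕ × Multiset ℕ × Multiset ℕ
  | (j, A, B) => (j + 1, j ::ₘ B, (j + 1) ::ₘ (A.map (· + 1) + replicate (card B - card A) 1))

lemma toQbar4_mem_Qbar4 {n : ℕ} {x : ℕ × Multiset ℕ × Multiset ℕ} (hx : x ∈ coreTriples n) :
    toQbar4 x ∈ Qbar4 n := by
  obtain ⟨j, A, B⟩ := x
  obtain ⟨hj, hA, hB, hcard, hsum⟩ := mem_coreTriples.mp hx
  have hB' : ∀ b ∈ 2 ::ₘ B.map (· + 1), 2 ≤ b ∧ b ≤ j := by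
    simp only [forall_mem_cons, forall_mem_map_iff]
    exact ⟨⟨le_rfl, hj⟩, fun b hb => by have := hB b hb; omega⟩
  have hα : ∀ a ∈ j ::ₘ j ::ₘ A, 2 ≤ a ∧ a ≤ j := by
    simp only [forall_mem_cons]
    exact ⟨⟨hj, le_rfl⟩, ⟨hj, le_rfl⟩, hA⟩
  have hβ : ∀ b ∈ j ::ₘ j ::ₘ 2 ::ₘ B.map (· + 1), 2 ≤ b ∧ b ≤ j := by
    simp only [forall_mem_cons] at hB' ⊢
    exact ⟨⟨hj, le_rfl⟩, ⟨hj, le_rfl⟩, hB'⟩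
  have hj0 : 0 < j := by omega
  refine ⟨hj0, fun a ha => by have := hα a ha; omega, fun b hb => by have := hβ b hb; omega,
    fun a ha => (hα a ha).2, fun b hb => (hβ b hb).2, ?_,
    partAt_cons_cons_self hj0 (fun b hb => (hB' b hb).2) zero_le_one,
    partAt_cons_cons_self hj0 (fun b hb => (hB' b hb).2) le_rfl, ?_,
    partAt_cons_cons_self hj0 (fun a ha => (hA a ha).2) zero_le_one,
    partAt_cons_cons_self hj0 (fun a ha => (hA a ha).2) le_rfl,
    by exact_mod_cast le_sMin_iff.mpr fun a ha => (hα a ha).1,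
    by exact_mod_cast sMin_eq_iff.mpr ⟨by simp, fun b hb => (hβ b hb).1⟩⟩
  · simp only [toQbar4, sum_cons, sum_map_add_one]
    omega
  · simp only [toQbar4, card_cons, card_map]
    omega

lemma toP7_mem_P7 {n : ℕ} {x : ℕ × Multiset ℕ × Multiset ℕ} (hx : x ∈ coreTriples n) :
    toP7 x ∈ P7 n := by
  obtain ⟨j, A, B⟩ := x
  obtain ⟨hj, hA, hB, hcard, hsum⟩ := mem_coreTriples.mp hx
  have hγ : ∀ c ∈ j ::ₘ B, 0 < c ∧ c ≤ j := by
    simp only [forall_mem_cons]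
    exact ⟨⟨by omega, le_rfl⟩, fun b hb => ⟨(hB b hb).1, (hB b hb).2.le⟩⟩
  have hδ : ∀ d ∈ (j + 1) ::ₘ (A.map (· + 1) + replicate (card B - card A) 1),
      0 < d ∧ d ≤ j + 1 ∧ d ≠ 2 := by
    intro d hd
    rcases mem_cons.mp hd with rfl | hd
    · omega
    rcases mem_add.mp hd with hd | hd
    · obtain ⟨a, ha, rfl⟩ := mem_map.mp hd
      have := hA a ha
      omega
    · rw [eq_of_mem_replicate hd]
      omega
  have hcount : (j ::ₘ B).count j = 1 := by
    rw [count_cons_self, count_eq_zero.mpr fun h => lt_irrefl j (hB j h).2]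
  obtain ⟨hγ1, hγ2⟩ :=
    (partAt_one_eq_and_partAt_two_lt_iff (by omega) fun c hc => (hγ c hc).2).mpr hcount
  have hδ1 : partAt ((j + 1) ::ₘ (A.map (· + 1) + replicate (card B - card A) 1)) 1 = j + 1 :=
    (partAt_succ_eq_iff j.succ_pos (fun d hd => (hδ d hd).2.1) 0).mpr
      (by rw [count_cons_self]; omega)
  refine ⟨j.succ_pos, fun c hc => (hγ c hc).1, fun d hd => (hδ d hd).1,
    fun c hc => (hγ c hc).2.trans j.le_succ, fun d hd => (hδ d hd).2.1, ?_, ?_, ?_, ?_, hδ1,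
    fun h => (hδ 2 h).2.2 rfl⟩ <;> dsimp only [toP7]
  · simp only [sum_cons, sum_add, sum_map_add_one, sum_replicate, smul_eq_mul]
    have : (j + 1) * (j + 1) = j * j + 2 * j + 1 := by ring
    omega
  · simp only [card_cons, card_add, card_map, card_replicate]
    omega
  · omega
  · omega

lemma mem_image_toQbar4_of_mem_Qbar4 {n : ℕ} {x : ℕ × Multiset ℕ × Multiset ℕ} (hx : x ∈ Qbar4 n) :
    x ∈ toQbar4 '' coreTriples n := by
  obtain ⟨j, α, β⟩ := x
  simp only [Qbar4, Set.mem_ofPred_eq] at hx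
  obtain ⟨hj, -, -, hαj, hβj, hsum, -, hβ2, hcard, -, hα2, hαmin, hβmin⟩ := hx
  have hα : ∀ a ∈ α, 2 ≤ a := (le_sMin_iff (k := 2)).mp (by exact_mod_cast hαmin)
  obtain ⟨h2β, hβ⟩ := (sMin_eq_iff (k := 2)).mp (by exact_mod_cast hβmin)
  have hj2 : 2 ≤ j := hβj 2 h2β
  obtain ⟨A, rfl⟩ := exists_eq_cons_cons_of_partAt_two_eq hj hαj hα2
  obtain ⟨B', rfl⟩ := exists_eq_cons_cons_of_partAt_two_eq hj hβj hβ2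
  simp only [card_cons] at hcard
  -- when `j = 2` every part of `β` is `2`, and `B'` is nonempty because `ℓ(β) > ℓ(α) ≥ 2`
  have h2B' : 2 ∈ B' := by
    rcases eq_or_ne j 2 with rfl | hj2'
    · obtain ⟨b, hb⟩ := card_pos_iff_exists_mem.mp (by omega : 0 < card B')
      have := hβ b (by simp [hb])
      have := hβj b (by simp [hb])
      rwa [show b = 2 by omega] at hb
    · simpa [hj2'.symm] using h2β
  obtain ⟨B'', rfl⟩ := exists_cons_of_mem h2B'
  obtain ⟨B, rfl⟩ := exists_map_add_one_eq (s := B'') fun b hb => by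
    have := hβ b (by simp [hb])
    omega
  refine ⟨(j, A, B), mem_coreTriples.mpr ⟨hj2, fun a ha => ?_, fun b hb => ?_, ?_, ?_⟩, rfl⟩
  · exact ⟨hα a (by simp [ha]), hαj a (by simp [ha])⟩
  · have := hβ (b + 1) (by simp [hb])
    have := hβj (b + 1) (by simp [hb])
    omega
  · simp only [card_cons, card_map] at hcard
    omega
  · simp only [sum_cons, sum_map_add_one] at hsum
    omega

lemma mem_image_toP7_of_mem_P7 {n : ℕ} {x : ℕ × Multiset ℕ × Multiset ℕ} (hx : x ∈ P7 n) :
    x ∈ toP7 '' coreTriples n := by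
  obtain ⟨j', γ, δ⟩ := x
  simp only [P7, Set.mem_ofPred_eq] at hx
  obtain ⟨hj', hγpos, hδpos, -, hδj, hsum, hcard, hγ1, hγ2, hδ1, h2δ⟩ := hx
  obtain ⟨j, rfl⟩ : ∃ j, j' = j + 1 := ⟨j' - 1, by omega⟩
  replace hγ1 : partAt γ 1 = j := by omega
  replace hγ2 : partAt γ 2 < j := by omega
  have hγj : ∀ c ∈ γ, c ≤ j := fun c hc => hγ1 ▸ le_partAt_one hc
  have hγcount := (partAt_one_eq_and_partAt_two_lt_iff (by omega) hγj).mp ⟨hγ1, hγ2⟩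
  obtain ⟨C, rfl⟩ := exists_cons_of_mem (count_pos.mp (by omega : 0 < γ.count j))
  have hjC : j ∉ C := by
    rw [← count_eq_zero]
    rw [count_cons_self] at hγcount
    omega
  obtain ⟨D, rfl⟩ := exists_cons_of_mem
    (count_pos.mp ((partAt_succ_eq_iff j.succ_pos hδj 0).mp hδ1))
  have hj2 : 2 ≤ j := by
    have : j + 1 ≠ 2 := fun h => h2δ (h ▸ mem_cons_self _ _)
    omega
  obtain ⟨A, k, rfl, hA⟩ :=
    exists_eq_map_add_one_add_replicate_one fun d hd => hδpos d (mem_cons_of_mem hd)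
  simp only [card_cons, card_add, card_map, card_replicate] at hcard
  refine ⟨(j, A, C), mem_coreTriples.mpr ⟨hj2, fun a ha => ?_, fun c hc => ?_, by omega, ?_⟩, ?_⟩
  · have := hδj (a + 1) (by simp [ha])
    have : a + 1 ≠ 2 := fun h => h2δ (by simp [← h, ha])
    have := hA a ha
    omega
  · have := hγpos c (mem_cons_of_mem hc)
    have := hγj c (mem_cons_of_mem hc)
    have : c ≠ j := fun h => hjC (h ▸ hc)
    omega
  · simp only [sum_cons, sum_add, sum_map_add_one, sum_replicate, smul_eq_mul] at hsum
    have : (j + 1) * (j + 1) = j * j + 2 * j + 1 := by ring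
    omega
  · rw [toP7, show card C - card A = k by omega]

lemma toQbar4_injective : Function.Injective toQbar4 := by
  rintro ⟨j, A, B⟩ ⟨j', A', B'⟩ h
  simp only [toQbar4, Prod.mk.injEq] at h
  obtain ⟨rfl, hA, hB⟩ := h
  simp only [Multiset.cons_inj_right] at hA hB
  rw [hA, map_injective (add_left_injective 1) hB]

lemma injOn_toP7 (n : ℕ) : (coreTriples n).InjOn toP7 := by
  rintro ⟨j, A, B⟩ ⟨-, hA, -⟩ ⟨j', A', B'⟩ ⟨-, hA', -⟩ h
  simp only [toP7, Prod.mk.injEq, add_left_inj] at h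
  obtain ⟨rfl, hB, h⟩ := h
  simp only [Multiset.cons_inj_right] at hB h
  subst hB
  have := congrArg (filter (2 ≤ ·)) h
  rw [filter_map_add_one_add_replicate_one (fun a ha => by have := hA a ha; omega),
    filter_map_add_one_add_replicate_one (fun a ha => by have := hA' a ha; omega)] at this
  rw [map_injective (add_left_injective 1) this]

lemma image_toQbar4_coreTriples (n : ℕ) : toQbar4 '' coreTriples n = Qbar4 n :=
  (Set.image_subset_iff.mpr fun _ => toQbar4_mem_Qbar4).antisymm
    fun _ => mem_image_toQbar4_of_mem_Qbar4

lemma image_toP7_coreTriples (n : ℕ) : toP7 '' coreTriples n = P7 n :=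
  (Set.image_subset_iff.mpr fun _ => toP7_mem_P7).antisymm fun _ => mem_image_toP7_of_mem_P7

/-- For every integer n ≥ 0, #Q̄₄(0,n) = #P₇(0,n). -/
theorem Qbar4_card_eq_P7_card (n : ℕ) : Nat.card (Qbar4 n) = Nat.card (P7 n) := by
  rw [← image_toQbar4_coreTriples, ← image_toP7_coreTriples,
    Nat.card_image_of_injOn toQbar4_injective.injOn, Nat.card_image_of_injOn (injOn_toP7 n)]
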